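/- Bound on the image of the residual: Under the assumptions that b = A x̄ with x̄ s-sparse supported on S, h(x*) ≤ h(x̄) where h(x) = (1/2)‖Ax−b‖_2^2 + λ(‖x‖_1 − ‖x‖_2), and A satisfies the ℓ_{1-2}-REC(s,s), it holds that ‖A x* − A x̄‖_2 ≤ 2λ(√s + 1)/φ(s,s). -/

import Mathlib

/-! Put `h = x* - x̄`. Since `Ax̄ = b` and `x̄` vanishes off `S`, the level-set inequality gives the
basic inequality `½‖Ah‖₂² ≤ λ (‖h_S‖₁ - ‖h_{Sᶜ}‖₁ + ‖h‖₂)`. Its right-hand side is therefore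
nonnegative, which is exactly the cone condition of the ℓ₁₋₂-REC, so `φ ‖h_S‖₂ ≤ ‖Ah‖₂`. Bounding the
bracket by `(√s + 1) ‖h_S‖₂` yields `½‖Ah‖₂² ≤ λ (√s + 1) ‖Ah‖₂ / φ`. -/

open Finset

noncomputable def l1 {k : ℕ} (x : Fin k → ℝ) : ℝ := ∑ i, |x i|

noncomputable def l2 {k : ℕ} (x : Fin k → ℝ) : ℝ := Real.sqrt (∑ i, (x i)^2)

def restr {k : ℕ} (I : Finset (Fin k)) (x : Fin k → ℝ) : Fin k → ℝ :=
  fun i => if i ∈ I then x i else 0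


def TLargest {k : ℕ} (x : Fin k → ℝ) (I : Finset (Fin k)) (t : ℕ) (T : Finset (Fin k)) : Prop :=
  T ⊆ Iᶜ ∧ T.card = min t Iᶜ.card ∧ ∀ i ∈ T, ∀ j ∈ Iᶜ \ T, |x j| ≤ |x i|

section Norms

variable {k : ℕ}

lemma l2_eq_norm (x : Fin k → ℝ) : l2 x = ‖(WithLp.toLp 2 x : EuclideanSpace ℝ (Fin k))‖ := by
  simp [l2, EuclideanSpace.norm_eq]

lemma l2_nonneg (x : Fin k → ℝ) : 0 ≤ l2 x := Real.sqrt_nonneg _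

lemma l2_add_le (x y : Fin k → ℝ) : l2 (x + y) ≤ l2 x + l2 y := by
  simpa only [l2_eq_norm, WithLp.toLp_add] using norm_add_le _ _

lemma l2_sub_l2_le (x y : Fin k → ℝ) : l2 x - l2 y ≤ l2 (x - y) := by
  simpa only [l2_eq_norm, WithLp.toLp_sub] using norm_sub_norm_le _ _

lemma l2_le_l1 (x : Fin k → ℝ) : l2 x ≤ l1 x := by
  have hl1 : 0 ≤ l1 x := sum_nonneg fun i _ => abs_nonneg (x i)
  rw [l2, Real.sqrt_le_left hl1]
  simpa only [l1, sq_abs] using sum_sq_le_sq_sum_of_nonneg fun i _ => abs_nonneg (x i)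

lemma restr_add_restr_compl (I : Finset (Fin k)) (x : Fin k → ℝ) :
    restr I x + restr Iᶜ x = x := by
  funext i
  by_cases hi : i ∈ I <;> simp [restr, hi]

lemma l1_restr (I : Finset (Fin k)) (x : Fin k → ℝ) : l1 (restr I x) = ∑ i ∈ I, |x i| := by
  simp [l1, restr, apply_ite, sum_ite_mem]

lemma l2_restr (I : Finset (Fin k)) (x : Fin k → ℝ) :
    l2 (restr I x) = √(∑ i ∈ I, x i ^ 2) := by
  simp [l2, restr, ite_pow, sum_ite_mem]

lemma l2_restr_mono {I J : Finset (Fin k)} (hIJ : I ⊆ J) (x : Fin k → ℝ) :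
    l2 (restr I x) ≤ l2 (restr J x) := by
  rw [l2_restr, l2_restr]
  exact Real.sqrt_le_sqrt (sum_le_sum_of_subset_of_nonneg hIJ fun i _ _ => sq_nonneg (x i))

lemma l1_restr_le_sqrt_card_mul_l2_restr (I : Finset (Fin k)) (x : Fin k → ℝ) :
    l1 (restr I x) ≤ √(#I : ℝ) * l2 (restr I x) := by
  rw [l1_restr, l2_restr, ← Real.sqrt_mul (Nat.cast_nonneg _),
    Real.le_sqrt (sum_nonneg fun i _ => abs_nonneg (x i)) (by positivity)]
  simpa only [sq_abs] using sq_sum_le_card_mul_sum_sq (s := I) (f := fun i => |x i|)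

lemma l2_le_l2_restr_add_l1_restr_compl (I : Finset (Fin k)) (x : Fin k → ℝ) :
    l2 x ≤ l2 (restr I x) + l1 (restr Iᶜ x) :=
  calc l2 x = l2 (restr I x + restr Iᶜ x) := by rw [restr_add_restr_compl]
    _ ≤ l2 (restr I x) + l2 (restr Iᶜ x) := l2_add_le _ _
    _ ≤ l2 (restr I x) + l1 (restr Iᶜ x) := by gcongr; exact l2_le_l1 _

lemma l1_restr_sub_l1_restr_compl_add_l2_le (I : Finset (Fin k)) (x : Fin k → ℝ) :
    l1 (restr I x) - l1 (restr Iᶜ x) + l2 x ≤ (√(#I : ℝ) + 1) * l2 (restr I x) := by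
  linarith [l2_le_l2_restr_add_l1_restr_compl I x, l1_restr_le_sqrt_card_mul_l2_restr I x]

lemma l1_sub_l1_le_of_eq_zero_of_notMem {S : Finset (Fin k)} {x : Fin k → ℝ}
    (hx : ∀ i ∉ S, x i = 0) (y : Fin k → ℝ) :
    l1 x - l1 y ≤ l1 (restr S (y - x)) - l1 (restr Sᶜ (y - x)) := by
  rw [l1_restr, l1_restr]
  have hxS : l1 x = ∑ i ∈ S, |x i| := by
    have hoff : ∑ i ∈ Sᶜ, |x i| = 0 := sum_eq_zero fun i hi => by simp [hx i (mem_compl.mp hi)]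
    rw [l1, ← sum_add_sum_compl S, hoff, add_zero]
  have hy : l1 y = ∑ i ∈ S, |y i| + ∑ i ∈ Sᶜ, |y i| := (sum_add_sum_compl S _).symm
  have hon : ∑ i ∈ S, |x i| - ∑ i ∈ S, |y i| ≤ ∑ i ∈ S, |(y - x) i| := by
    rw [← sum_sub_distrib]
    gcongr with i
    simpa [abs_sub_comm] using abs_sub_abs_le_abs_sub (x i) (y i)
  have hoff : ∑ i ∈ Sᶜ, |(y - x) i| = ∑ i ∈ Sᶜ, |y i| :=
    sum_congr rfl fun i hi => by simp [hx i (mem_compl.mp hi)]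
  linarith

end Norms

lemma exists_subset_card_eq_forall_le {α β : Type*} [DecidableEq α] [LinearOrder β] (f : α → β)
    (U : Finset α) {t : ℕ} (ht : t ≤ #U) :
    ∃ T ⊆ U, #T = t ∧ ∀ i ∈ T, ∀ j ∈ U \ T, f j ≤ f i := by
  induction t with
  | zero => exact ⟨∅, empty_subset U, rfl, by simp⟩
  | succ t ih =>
    obtain ⟨T, hTU, hcard, hmax⟩ := ih (Nat.le_of_succ_le ht)
    have hne : (U \ T).Nonempty := by
      rw [← card_pos, card_sdiff_of_subset hTU]
      omega
    obtain ⟨j₀, hj₀, hj₀max⟩ := (U \ T).exists_max_image f hne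
    obtain ⟨hj₀U, hj₀T⟩ := mem_sdiff.mp hj₀
    refine ⟨insert j₀ T, insert_subset hj₀U hTU, by rw [card_insert_of_notMem hj₀T, hcard], ?_⟩
    intro i hi j hj
    have hjT : j ∈ U \ T := sdiff_subset_sdiff subset_rfl (subset_insert j₀ T) hj
    rcases mem_insert.mp hi with rfl | hiT
    · exact hj₀max j hjT
    · exact hmax i hiT j hjT

lemma exists_TLargest {k : ℕ} (x : Fin k → ℝ) (I : Finset (Fin k)) (t : ℕ) :
    ∃ T, TLargest x I t T :=
  exists_subset_card_eq_forall_le (|x ·|) Iᶜ (min_le_right t #Iᶜ)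

lemma half_sq_l2_mulVec_sub_le {m n : ℕ} (A : Matrix (Fin m) (Fin n) ℝ) {xbar xstar : Fin n → ℝ}
    {b : Fin m → ℝ} {S : Finset (Fin n)} {lam : ℝ} (hlam : 0 ≤ lam) (hb : b = A.mulVec xbar)
    (hxbar : ∀ i ∉ S, xbar i = 0)
    (hlev : (1/2) * (l2 (A.mulVec xstar - b))^2 + lam * (l1 xstar - l2 xstar) ≤
            (1/2) * (l2 (A.mulVec xbar - b))^2 + lam * (l1 xbar - l2 xbar)) :
    (1/2) * l2 (A.mulVec (xstar - xbar)) ^ 2 ≤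
      lam * (l1 (restr S (xstar - xbar)) - l1 (restr Sᶜ (xstar - xbar)) + l2 (xstar - xbar)) := by
  subst hb
  rw [sub_self, ← Matrix.mulVec_sub] at hlev
  have hl2_zero : l2 (0 : Fin m → ℝ) = 0 := by simp [l2]
  have hl1 := l1_sub_l1_le_of_eq_zero_of_notMem hxbar xstar
  have hl2 := l2_sub_l2_le xstar xbar
  have := mul_le_mul_of_nonneg_left (add_le_add hl1 hl2) hlam
  rw [hl2_zero] at hlev
  linarith

lemma le_two_mul_of_half_sq_le_mul {D c : ℝ} (hD : 0 ≤ D) (hc : 0 ≤ c)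
    (h : (1/2) * D ^ 2 ≤ c * D) : D ≤ 2 * c := by
  rcases hD.eq_or_lt with rfl | hD
  · linarith
  · nlinarith

theorem stmt14 {m n : ℕ} (A : Matrix (Fin m) (Fin n) ℝ) (xbar xstar : Fin n → ℝ)
    (b : Fin m → ℝ) (S : Finset (Fin n)) (s : ℕ) (lam φ : ℝ) (hlam : 0 < lam)
    (hb : b = A.mulVec xbar) (hsupp : ∀ i, xbar i ≠ 0 ↔ i ∈ S) (hcardS : S.card = s)
    (hφ : 0 < φ)
    (hREC : ∀ (x : Fin n → ℝ) (I T : Finset (Fin n)), I.card ≤ s →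
      l1 (restr Iᶜ x) ≤ l1 (restr I x) + l2 x → TLargest x I s T →
      φ * l2 (restr (I ∪ T) x) ≤ l2 (A.mulVec x))
    (hlev : (1/2) * (l2 (A.mulVec xstar - b))^2 + lam * (l1 xstar - l2 xstar) ≤
            (1/2) * (l2 (A.mulVec xbar - b))^2 + lam * (l1 xbar - l2 xbar)) :
    l2 (A.mulVec xstar - A.mulVec xbar) ≤ 2 * lam * (Real.sqrt s + 1) / φ := by
  set h := xstar - xbar
  have hxbar : ∀ i ∉ S, xbar i = 0 := fun i hi => not_not.mp (mt (hsupp i).mp hi)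
  have hbasic := half_sq_l2_mulVec_sub_le A hlam.le hb hxbar hlev
  have hcone : l1 (restr Sᶜ h) ≤ l1 (restr S h) + l2 h := by
    have := nonneg_of_mul_nonneg_right ((by positivity : (0 : ℝ) ≤ _).trans hbasic) hlam
    linarith
  obtain ⟨T, hT⟩ := exists_TLargest h S s
  have hrec : φ * l2 (restr S h) ≤ l2 (A.mulVec h) :=
    (mul_le_mul_of_nonneg_left (l2_restr_mono subset_union_left h) hφ.le).trans
      (hREC h S T hcardS.le hcone hT)
  have hbracket := l1_restr_sub_l1_restr_compl_add_l2_le S h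
  rw [hcardS] at hbracket
  rw [← Matrix.mulVec_sub, mul_assoc, mul_div_assoc]
  refine le_two_mul_of_half_sq_le_mul (l2_nonneg _) (by positivity) ?_
  calc (1/2) * l2 (A.mulVec h) ^ 2
      ≤ lam * ((√(s : ℝ) + 1) * l2 (restr S h)) := hbasic.trans (by gcongr)
    _ ≤ lam * ((√(s : ℝ) + 1) * (l2 (A.mulVec h) / φ)) := by
      gcongr
      rwa [le_div_iff₀ hφ, mul_comm]
    _ = lam * (√(s : ℝ) + 1) / φ * l2 (A.mulVec h) := by ring
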